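/- arXiv:1909.06898 — 2 statements merged into one kernel-verified Lean document; each statement's English description precedes it below -/
import Mathlib

section
/- Let r ∈ K(x,y) be a rational function of the form r = Σ_{i=1}^{m} Σ_{k=1}^{d_i} M_{ik}(1/p_i(λ_i x + μ_i y)^k) as in the context. Let u ∈ K[x] be the common denominator of the M_{ik} and write each M_{ik} = (1/u) M̃_{ik} with M̃_{ik} ∈ K[x, y, S_{λ_i,μ_i}]. Let L = Σ_{ℓ=0}^{ρ} c_ℓ σ_x^{ℓ}(u) S_x^{ℓ} ∈ K[x][S_x] with ρ ∈ N and c_ℓ ∈ K[x]. Then for each pair (i,k) with 1 ≤ i ≤ m and 1 ≤ k ≤ d_i, the left scalar remainder R_{ik} of L ⊙ M_{ik} by S_y − 1 can be written as R_{ik} = c_ρ R̃_{ikρ} + ⋯ + c_0 R̃_{ik0}, where R̃_{ikℓ} ∈ K[x, y, S_{λ_i,μ_i}] with deg_x(R̃_{ikℓ}) ≤ deg_x(M̃_{ik}), deg_y(R̃_{ikℓ}) ≤ deg_y(M̃_{ik}), and total degree in (x,y) of R̃_{ikℓ} at most the total degree in (x,y) of M̃_{ik}. -/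
/-!
Multiplying out, the factor `σ_x^ℓ(u)` of `L` cancels the denominator of `σ_x^ℓ(M_{ik})`, so
`L ⊙ M_{ik} = Σ_ℓ c_ℓ (S_x^ℓ ⊙ M̃_{ik})`, and `S_x^ℓ ⊙ M̃_{ik}` has the coefficients `σ_x^ℓ(M̃_{ik,j})`
placed at the orders `ℓλ + j`. On `A_{λ,μ}`, the operator `S_y − 1` acts by
`a S^j ↦ σ_y(a) S^{j+μ} − a S^j`, so modulo its left `⊙`-multiples `a S^j` reduces to
`σ_y^{-(j div μ)}(a) S^{j mod μ}`; a multiple whose orders all lie in `[0, μ)` vanishes, hence this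
reduction is the left scalar remainder. Finally the shifts `x ↦ x + n`, `y ↦ y + n` only replace a
monomial `x^i y^j` by monomials `x^{i'} y^{j'}` with `i' ≤ i`, `j' ≤ j`, so none of the three
degrees grows.
-/

open Polynomial BigOperators

noncomputable section

/-- The shift automorphism `X ↦ X + 1` of a polynomial ring. -/
def shiftPoly (A : Type*) [CommRing A] : Polynomial A ≃ₐ[A] Polynomial A :=
  AlgEquiv.ofAlgHom (aeval (X + 1)) (aeval (X - 1))
    (by apply algHom_ext; simp) (by apply algHom_ext; simp)

variable (K : Type*) [Field K] [CharZero K]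

/-- `K[x,y]` modelled as `K[x][y]`: the inner variable is `x`, the outer one is `y`. -/
abbrev Rxy := Polynomial (Polynomial K)

/-- The rational function field `K(x,y)`, as the fraction field of `K[x][y]`. -/
abbrev Fxy := FractionRing (Rxy K)

/-- The shift `x ↦ x + 1` on `K[x]`. -/
def σxK : RingAut (Polynomial K) := (shiftPoly K).toRingEquiv

/-- The shift `x ↦ x + 1` on `K[x,y]`. -/
def σxR : RingAut (Rxy K) := mapEquiv (shiftPoly K).toRingEquiv

/-- The shift `y ↦ y + 1` on `K[x,y]`. -/
def σyR : RingAut (Rxy K) := (shiftPoly (Polynomial K)).toRingEquiv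

/-- The shift `σ_x` on `K(x,y)`. -/
def σxF : RingAut (Fxy K) := IsFractionRing.ringEquivOfRingEquiv (σxR K)

/-- The shift `σ_y` on `K(x,y)`. -/
def σyF : RingAut (Fxy K) := IsFractionRing.ringEquivOfRingEquiv (σyR K)

/-- The canonical map `K[x,y] → K(x,y)`. -/
def ι₀ : Rxy K →+* Fxy K := algebraMap (Rxy K) (Fxy K)

/-- The canonical map `K[x] → K(x,y)`. -/
def ιx₀ : Polynomial K →+* Fxy K := (ι₀ K).comp (Polynomial.C : Polynomial K →+* Rxy K)

/-- The canonical map `K → K(x,y)`. -/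
def ιK : K →+* Fxy K := (ιx₀ K).comp (Polynomial.C : K →+* Polynomial K)

/-- The element `x` of `K(x,y)`. -/
def xF : Fxy K := ιx₀ K X

/-- The element `y` of `K(x,y)`. -/
def yF : Fxy K := ι₀ K X

/-- A rational function `f ∈ K(x,y)` is `σ_y`-summable if `f = σ_y(g) - g`
for some `g ∈ K(x,y)`. -/
def IsSummableY (f : Fxy K) : Prop := ∃ g : Fxy K, f = σyF K g - g

/-- The Laurent operator ring `A = K(x,y)[S_x,S_y,S_x⁻¹,S_y⁻¹]`, an operator being
recorded by its (finitely supported) family of coefficients `a_{ij}` in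
`L = Σ a_{ij} S_x^i S_y^j`. -/
abbrev OpA := (ℤ × ℤ) →₀ Fxy K

/-- The subring `A_{λ,μ} = K(x,y)[S_{λ,μ}, S_{λ,μ}⁻¹]`, an operator being recorded by its
(finitely supported) family of coefficients `a_i` in `M = Σ a_i S_{λ,μ}^i`. -/
abbrev OpB := ℤ →₀ Fxy K

/-- The automorphism `σ_x^i σ_y^j` of `K(x,y)` attached to the monomial `S_x^i S_y^j`. -/
def σv (v : ℤ × ℤ) : RingAut (Fxy K) := σxF K ^ v.1 * σyF K ^ v.2

/-- Multiplication in `A`, determined by the commutation rule `S_x^i S_y^j f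
= σ_x^i σ_y^j (f) S_x^i S_y^j`. -/
def mulA (L M : OpA K) : OpA K :=
  L.sum fun p a => M.sum fun q b => Finsupp.single (p + q) (a * σv K p b)

/-- The application of an operator `L = Σ a_{ij} S_x^i S_y^j ∈ A` to a rational function. -/
def applyA (L : OpA K) (f : Fxy K) : Fxy K := L.sum fun p a => a * σv K p f

/-- The operator `S_y - 1 ∈ A`. -/
def SyOne : OpA K :=
  Finsupp.single ((0 : ℤ), (1 : ℤ)) (1 : Fxy K) - Finsupp.single ((0 : ℤ), (0 : ℤ)) (1 : Fxy K)

section TypeLamMu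

/- `α`, `β` are the Bézout cofactors for the integer-linear type `(λ, μ)`,
so that `S_{λ,μ} = S_x^α S_y^β`. -/
variable (α β : ℤ)

/-- The automorphism `σ_{λ,μ} = σ_x^α σ_y^β` of `K(x,y)` attached to `S_{λ,μ} = S_x^α S_y^β`. -/
def τF : RingAut (Fxy K) := σxF K ^ α * σyF K ^ β

/-- Multiplication in `A_{λ,μ}`. -/
def mulB (L M : OpB K) : OpB K :=
  L.sum fun i a => M.sum fun j b => Finsupp.single (i + j) (a * (τF K α β ^ i) b)

/-- The application of an operator `M = Σ a_i S_{λ,μ}^i ∈ A_{λ,μ}` to a rational function. -/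
def applyB (M : OpB K) (f : Fxy K) : Fxy K := M.sum fun i a => a * (τF K α β ^ i) f

/-- The inclusion `A_{λ,μ} ⊆ A`, sending `S_{λ,μ}^k` to `S_x^{kα} S_y^{kβ}`. -/
def ιB (M : OpB K) : OpA K := Finsupp.mapDomain (fun k : ℤ => (k * α, k * β)) M

/-- The left `K(x,y)`-linear map `φ_{λ,μ} : A → A_{λ,μ}`,
sending `Σ a_{ij} S_x^i S_y^j` to `Σ a_{ij} S_{λ,μ}^{iλ+jμ}`. -/
def φB (lam μ : ℤ) (L : OpA K) : OpB K :=
  Finsupp.mapDomain (fun p : ℤ × ℤ => p.1 * lam + p.2 * μ) L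

/-- The left scalar multiplication `L ⊙ M = φ_{λ,μ}(L M)` of `L ∈ A` on `M ∈ A_{λ,μ}`. -/
def odot (lam μ : ℤ) (L : OpA K) (M : OpB K) : OpB K :=
  φB K lam μ (mulA K L (ιB K α β M))

end TypeLamMu

/-- The lowest order `lord(M)` of a (nonzero) operator `M ∈ A_{λ,μ}`. -/
def lord (M : OpB K) : ℤ := WithTop.untopD 0 (M.support.min)

/-- The highest order `hord(M)` of a (nonzero) operator `M ∈ A_{λ,μ}`. -/
def hord (M : OpB K) : ℤ := WithBot.unbotD 0 (M.support.max)

/-- The inclusion `K(x,y)[S_y, S_y⁻¹] ⊆ A`. -/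
def ιy (L : ℤ →₀ Fxy K) : OpA K := Finsupp.mapDomain (fun j : ℤ => ((0 : ℤ), j)) L

/-- The inclusion `K[x][S_x] ⊆ A`, for operators with polynomial coefficients
supported on nonnegative powers of `S_x`. -/
def ιxOp (L : ℕ →₀ Polynomial K) : OpA K :=
  L.sum fun ℓ c => Finsupp.single ((ℓ : ℤ), (0 : ℤ)) (ιx₀ K c)

/-- A nonzero operator `L = Σ c_ℓ S_x^ℓ ∈ K[x][S_x]` is a telescoper for `f ∈ K(x,y)`
if `L(f)` is `σ_y`-summable. -/
def IsTelescoper (L : ℕ →₀ Polynomial K) (f : Fxy K) : Prop :=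
  L ≠ 0 ∧ IsSummableY K (applyA K (ιxOp K L) f)

/-- The degree in `x` of a polynomial in `K[x,y] = K[x][y]`. -/
def degX (r : Rxy K) : ℕ := r.support.sup fun n => (r.coeff n).natDegree

/-- The total degree in `x, y` of a polynomial in `K[x,y] = K[x][y]`. -/
def degXY (r : Rxy K) : ℕ := r.support.sup fun n => n + (r.coeff n).natDegree

end

noncomputable section

variable (K : Type*) [Field K] [CharZero K]

/-- The element `λx + μy` of `K(x,y)`. -/
def wF (lam μ : ℤ) : Fxy K := (lam : Fxy K) * xF K + (μ : Fxy K) * yF K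

/-- The rational function `p(λx + μy) ∈ K(x,y)`, for a univariate polynomial `p ∈ K[z]`. -/
def peF (lam μ : ℤ) (p : Polynomial K) : Fxy K := Polynomial.eval₂ (ιK K) (wF K lam μ) p

/-- The element `λx + μy` of `K[x,y]`. -/
def wR (lam μ : ℤ) : Rxy K :=
  (lam : Rxy K) * Polynomial.C Polynomial.X + (μ : Rxy K) * Polynomial.X

/-- The polynomial `p(λx + μy) ∈ K[x,y]`, for a univariate polynomial `p ∈ K[z]`. -/
def peR (lam μ : ℤ) (p : Polynomial K) : Rxy K :=
  Polynomial.eval₂ (algebraMap K (Rxy K)) (wR K lam μ) p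

end

noncomputable section

variable (K : Type*) [Field K] [CharZero K]

/-- A nonzero polynomial `b ∈ K[x,y]` is `σ_y`-free if `gcd(b, σ_y^ℓ(b)) ∈ K[x]` for all
nonzero integers `ℓ`, i.e. every common divisor of `b` and `σ_y^ℓ(b)` has `y`-degree `0`. -/
def SigmaYFree (b : Rxy K) : Prop :=
  ∀ ℓ : ℤ, ℓ ≠ 0 → ∀ d : Rxy K, d ∣ b → d ∣ (σyR K ^ ℓ) b → d.natDegree = 0

/-- A polynomial in `K[x,y] = K[x][y]` is `y`-primitive if the gcd over `K[x]` of its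
coefficients with respect to `y` equals `1`. -/
def YPrimitive (b : Rxy K) : Prop :=
  ∀ d : Polynomial K, (∀ n : ℕ, d ∣ b.coeff n) → IsUnit d

/-- A rational function is proper with respect to `y`: the degree in `y` of its numerator
is less than that of its denominator. -/
def ProperY (f : Fxy K) : Prop :=
  ∃ a b : Rxy K, b ≠ 0 ∧ f = ι₀ K a / ι₀ K b ∧ a.degree < b.degree

/-- A rational function has a `σ_y`-free denominator (in lowest terms). -/
def SigmaYFreeDenom (f : Fxy K) : Prop :=
  ∃ a b : Rxy K, b ≠ 0 ∧ IsRelPrime a b ∧ f = ι₀ K a / ι₀ K b ∧ SigmaYFree K b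

/-- `r` is a `σ_y`-remainder (of itself): proper with respect to `y`, with `σ_y`-free
denominator. -/
def IsSigmaYRemainder (r : Fxy K) : Prop := ProperY K r ∧ SigmaYFreeDenom K r

/-- `r` is a `σ_y`-remainder of `f`: `f − r` is `σ_y`-summable, `r` is proper with
respect to `y`, and the denominator of `r` is `σ_y`-free. -/
def IsSigmaYRemainderOf (r f : Fxy K) : Prop :=
  IsSummableY K (f - r) ∧ IsSigmaYRemainder K r

end

noncomputable section

variable (K : Type*) [Field K] [CharZero K]

/-- Operators in `K[x,y][S_{λ,μ}]` (polynomial coefficients), recorded by their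
coefficient families. -/
abbrev OpR := ℤ →₀ Rxy K

/-- The inclusion `K[x,y][S_{λ,μ}] ⊆ K(x,y)[S_{λ,μ}, S_{λ,μ}⁻¹]`. -/
def toOpB (N : OpR K) : OpB K := Finsupp.mapRange (ι₀ K) (map_zero _) N

/-- The degree in `x` of an operator with coefficients in `K[x,y]`. -/
def degXOp (N : OpR K) : ℕ := N.support.sup fun l => degX K (N l)

/-- The degree in `y` of an operator with coefficients in `K[x,y]`. -/
def degYOp (N : OpR K) : ℕ := N.support.sup fun l => (N l).natDegree

/-- The total degree in `x, y` of an operator with coefficients in `K[x,y]`. -/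
def degXYOp (N : OpR K) : ℕ := N.support.sup fun l => degXY K (N l)

end

section Shifts

theorem apply_zpow_of_semiconj {A B : Type*} [Semiring A] [Semiring B] {g : A → B}
    {e : RingAut A} {f : RingAut B} (h : ∀ a, g (e a) = f (g a)) (n : ℤ) (a : A) :
    g ((e ^ n) a) = (f ^ n) (g a) := by
  have h_inv (a : A) : g (e⁻¹ a) = f⁻¹ (g a) := f.injective <| by
    rw [← h, ← RingAut.mul_apply, ← RingAut.mul_apply, mul_inv_cancel, mul_inv_cancel]
    rfl
  induction n using Int.induction_on generalizing a with
  | zero => rfl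
  | succ n ih =>
    rw [zpow_add_one, zpow_add_one, RingAut.mul_apply, RingAut.mul_apply, ih, h]
  | pred n ih =>
    rw [zpow_sub_one, zpow_sub_one, RingAut.mul_apply, RingAut.mul_apply, ih, h_inv]

theorem shiftPoly_apply_eq_taylor {A : Type*} [CommRing A] (q : A[X]) :
    shiftPoly A q = taylor 1 q := by
  rw [taylor_apply, comp_eq_aeval, map_one]
  rfl

theorem shiftPoly_symm_apply_eq_taylor {A : Type*} [CommRing A] (q : A[X]) :
    (shiftPoly A).symm q = taylor (-1) q := by
  rw [taylor_apply, comp_eq_aeval, map_neg, map_one, ← sub_eq_add_neg]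
  rfl

theorem shiftPoly_zpow_apply {A : Type*} [CommRing A] (n : ℤ) (q : A[X]) :
    ((shiftPoly A).toRingEquiv ^ n) q = taylor (n : A) q := by
  induction n using Int.induction_on generalizing q with
  | zero => simp
  | succ n ih =>
    rw [zpow_add_one, RingAut.mul_apply, ih]
    change taylor _ (shiftPoly A q) = _
    rw [shiftPoly_apply_eq_taylor, taylor_taylor]
    push_cast
    rfl
  | pred n ih =>
    rw [zpow_sub_one, RingAut.mul_apply, ih]
    change taylor _ ((shiftPoly A).symm q) = _
    rw [shiftPoly_symm_apply_eq_taylor, taylor_taylor]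
    push_cast
    ring_nf

end Shifts

section Dominance

variable {R : Type*} [Semiring R]

def DominatedBy (q' q : R[X][X]) : Prop :=
  ∀ n, q'.coeff n ≠ 0 → ∃ k, n ≤ k ∧ q.coeff k ≠ 0 ∧ (q'.coeff n).natDegree ≤ (q.coeff k).natDegree

structure IsDominanceDegree (D : R[X][X] → ℕ) : Prop where
  map_zero : D 0 = 0
  add_le : ∀ a b, D (a + b) ≤ max (D a) (D b)
  mono : ∀ {q' q}, DominatedBy q' q → D q' ≤ D q

theorem isDominanceDegree_natDegree :
    IsDominanceDegree (natDegree : R[X][X] → ℕ) where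
  map_zero := natDegree_zero
  add_le := natDegree_add_le
  mono {q' q} h := by
    refine natDegree_le_iff_coeff_eq_zero.mpr fun N hN => ?_
    by_contra hq'
    obtain ⟨k, hNk, hk, -⟩ := h N hq'
    exact absurd (le_natDegree_of_ne_zero hk) (by omega)

-- `degXOp`, `degYOp` and `degXYOp` are `opDeg` of `degX`, `natDegree` and `degXY`.
noncomputable def opDeg (D : R[X][X] → ℕ) (N : ℤ →₀ R[X][X]) : ℕ := N.support.sup fun l => D (N l)

theorem IsDominanceDegree.le_opDeg {D : R[X][X] → ℕ} (hD : IsDominanceDegree D)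
    (N : ℤ →₀ R[X][X]) (l : ℤ) : D (N l) ≤ opDeg D N := by
  by_cases hl : l ∈ N.support
  · exact Finset.le_sup (f := fun l => D (N l)) hl
  · rw [Finsupp.notMem_support_iff.mp hl, hD.map_zero]
    exact Nat.zero_le _

theorem IsDominanceDegree.opDeg_liftAddHom_le {D : R[X][X] → ℕ} (hD : IsDominanceDegree D)
    (f : ℤ → ℤ) (φ : ℤ → R[X][X] →+ R[X][X]) (hφ : ∀ l a, DominatedBy (φ l a) a)
    (N : ℤ →₀ R[X][X]) :
    opDeg D (Finsupp.liftAddHom (fun l => (Finsupp.singleAddHom (f l)).comp (φ l)) N)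
      ≤ opDeg D N := by
  refine Finset.sup_le fun j _ => ?_
  rw [Finsupp.liftAddHom_apply, Finsupp.sum_apply, Finsupp.sum]
  refine Finset.sum_induction _ (D · ≤ opDeg D N)
    (fun a b ha hb => (hD.add_le a b).trans (max_le ha hb))
    (by rw [hD.map_zero]; exact Nat.zero_le _) fun l _ => ?_
  simp only [AddMonoidHom.comp_apply, Finsupp.singleAddHom_apply, Finsupp.single_apply]
  split_ifs
  · exact (hD.mono (hφ l _)).trans (hD.le_opDeg N l)
  · rw [hD.map_zero]
    exact Nat.zero_le _

end Dominance

theorem dominatedBy_taylor_C {R : Type*} [CommSemiring R] (a : R) (q : R[X][X]) :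
    DominatedBy (taylor (C a) q) q := by
  intro n hn
  set s := q.support.filter (n ≤ ·)
  have hs : s.Nonempty := by
    by_contra hs
    refine hn ?_
    have hq (k : ℕ) (hk : n ≤ k) : q.coeff k = 0 := by
      by_contra h
      exact hs ⟨k, Finset.mem_filter.mpr ⟨mem_support_iff.mpr h, hk⟩⟩
    have : hasseDeriv n q = 0 := by
      ext e : 1
      rw [hasseDeriv_coeff, hq _ (Nat.le_add_left n e), mul_zero, coeff_zero]
    rw [taylor_coeff, this, eval_zero]
  obtain ⟨k, hk, hsup⟩ := s.exists_mem_eq_sup hs fun k => (q.coeff k).natDegree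
  refine ⟨k, (Finset.mem_filter.mp hk).2, mem_support_iff.mp (Finset.mem_filter.mp hk).1, ?_⟩
  rw [← hsup, taylor_coeff, eval_eq_sum, sum_def]
  refine natDegree_sum_le_of_forall_le _ _ fun e he => ?_
  rw [hasseDeriv_coeff, ← C_eq_natCast, ← C_pow]
  by_cases hq : q.coeff (e + n) = 0
  · simp [hq]
  refine (natDegree_mul_C_le _ _).trans <| (natDegree_C_mul_le _ _).trans ?_
  exact Finset.le_sup (f := fun k => (q.coeff k).natDegree)
    (Finset.mem_filter.mpr ⟨mem_support_iff.mpr hq, Nat.le_add_left n e⟩)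

section ReduceMod

variable {R : Type*} [Semiring R]

/-- Sends `a S^j` to `σ^{-(j div μ)}(a) S^{j mod μ}`: for `σ = σ_y` and `S = S_{λ,μ}` this is
the remainder of `a S^j` modulo left `⊙`-multiples of `S_y - 1`, which act as `S^μ - 1`. -/
noncomputable def reduceMod (σ : RingAut R) (μ : ℤ) : (ℤ →₀ R) →+ (ℤ →₀ R) :=
  Finsupp.liftAddHom fun j => (Finsupp.singleAddHom (j % μ)).comp (σ ^ (-(j / μ))).toAddMonoidHom

theorem reduceMod_single (σ : RingAut R) (μ j : ℤ) (a : R) :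
    reduceMod σ μ (Finsupp.single j a) = Finsupp.single (j % μ) ((σ ^ (-(j / μ))) a) :=
  Finsupp.liftAddHom_apply_single _ _ _

theorem support_reduceMod_subset (σ : RingAut R) {μ : ℤ} (hμ : 0 < μ) (N : ℤ →₀ R) :
    (reduceMod σ μ N).support ⊆ Finset.Ico 0 μ := by
  induction N using Finsupp.induction_linear with
  | zero => simp
  | add N N' h h' =>
    rw [map_add]
    exact Finsupp.support_add.trans (Finset.union_subset h h')
  | single j a =>
    rw [reduceMod_single]
    refine Finsupp.support_single_subset.trans (Finset.singleton_subset_iff.mpr ?_)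
    exact Finset.mem_Ico.mpr ⟨Int.emod_nonneg _ hμ.ne', Int.emod_lt_of_pos _ hμ⟩

end ReduceMod

section PolynomialCoefficients

variable {K : Type*} [Field K]

theorem σyR_zpow_apply (n : ℤ) (q : Rxy K) : (σyR K ^ n) q = taylor (n : Polynomial K) q :=
  shiftPoly_zpow_apply n q

theorem σyR_zpow_C (n : ℤ) (p : Polynomial K) : (σyR K ^ n) (C p) = C p := by
  rw [σyR_zpow_apply, taylor_C]

theorem σxR_zpow_C (n : ℤ) (p : Polynomial K) : (σxR K ^ n) (C p) = C ((σxK K ^ n) p) :=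
  (apply_zpow_of_semiconj (g := C) (e := σxK K) (f := σxR K)
    (fun _ => (map_C (σxK K : Polynomial K →+* Polynomial K)).symm) n p).symm

theorem coeff_σxR_zpow (n : ℤ) (q : Rxy K) (j : ℕ) :
    ((σxR K ^ n) q).coeff j = taylor (n : K) (q.coeff j) := by
  rw [apply_zpow_of_semiconj (g := fun q : Rxy K => q.coeff j) (f := σxK K)
    (fun q => coeff_map _ _) n q]
  exact shiftPoly_zpow_apply n _

theorem σxF_zpow_ι₀ (n : ℤ) (a : Rxy K) : (σxF K ^ n) (ι₀ K a) = ι₀ K ((σxR K ^ n) a) :=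
  (apply_zpow_of_semiconj
    (fun a => (IsFractionRing.ringEquivOfRingEquiv_algebraMap (σxR K) a).symm) n a).symm

theorem σyF_zpow_ι₀ (n : ℤ) (a : Rxy K) : (σyF K ^ n) (ι₀ K a) = ι₀ K ((σyR K ^ n) a) :=
  (apply_zpow_of_semiconj
    (fun a => (IsFractionRing.ringEquivOfRingEquiv_algebraMap (σyR K) a).symm) n a).symm

theorem degX_le_iff {q : Rxy K} {B : ℕ} : degX K q ≤ B ↔ ∀ n, (q.coeff n).natDegree ≤ B := by
  refine Finset.sup_le_iff.trans ⟨fun h n => ?_, fun h n _ => h n⟩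
  by_cases hq : q.coeff n = 0
  · simp [hq]
  · exact h n (mem_support_iff.mpr hq)

theorem degXY_le_iff {q : Rxy K} {B : ℕ} :
    degXY K q ≤ B ↔ ∀ n, q.coeff n ≠ 0 → n + (q.coeff n).natDegree ≤ B := by
  simp only [degXY, Finset.sup_le_iff, mem_support_iff]

theorem isDominanceDegree_degX : IsDominanceDegree (degX K) where
  map_zero := by simp [degX]
  add_le a b := degX_le_iff.mpr fun n => by
    rw [coeff_add]
    exact (natDegree_add_le _ _).trans
      (max_le_max (degX_le_iff.mp le_rfl n) (degX_le_iff.mp le_rfl n))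
  mono {q' q} h := degX_le_iff.mpr fun n => by
    by_cases hn : q'.coeff n = 0
    · simp [hn]
    obtain ⟨k, -, -, hk⟩ := h n hn
    exact hk.trans (degX_le_iff.mp le_rfl k)

theorem isDominanceDegree_degXY : IsDominanceDegree (degXY K) where
  map_zero := by simp [degXY]
  add_le a b := degXY_le_iff.mpr fun n hn => by
    rw [coeff_add] at hn ⊢
    by_cases ha : a.coeff n = 0
    · rw [ha, zero_add] at hn ⊢
      exact le_max_of_le_right (degXY_le_iff.mp le_rfl n hn)
    by_cases hb : b.coeff n = 0
    · rw [hb, add_zero]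
      exact le_max_of_le_left (degXY_le_iff.mp le_rfl n ha)
    calc n + (a.coeff n + b.coeff n).natDegree
        ≤ n + max (a.coeff n).natDegree (b.coeff n).natDegree :=
          Nat.add_le_add_left (natDegree_add_le _ _) n
      _ = max (n + (a.coeff n).natDegree) (n + (b.coeff n).natDegree) :=
          (Nat.add_max_add_left ..).symm
      _ ≤ _ := max_le_max (degXY_le_iff.mp le_rfl n ha) (degXY_le_iff.mp le_rfl n hb)
  mono {q' q} h := degXY_le_iff.mpr fun n hn => by
    obtain ⟨k, hnk, hk, hdeg⟩ := h n hn
    exact (add_le_add hnk hdeg).trans (degXY_le_iff.mp le_rfl k hk)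

theorem dominatedBy_σxR_zpow (n : ℤ) (q : Rxy K) : DominatedBy ((σxR K ^ n) q) q := by
  intro j hj
  rw [coeff_σxR_zpow] at hj ⊢
  exact ⟨j, le_rfl, fun h => hj (by rw [h, map_zero]), (natDegree_taylor _ _).le⟩

theorem dominatedBy_σyR_zpow (n : ℤ) (q : Rxy K) : DominatedBy ((σyR K ^ n) q) q := by
  rw [σyR_zpow_apply, ← map_intCast (C : K →+* Polynomial K)]
  exact dominatedBy_taylor_C _ q

variable (K) in
/-- `N ↦ S_x^ℓ ⊙ N` on operators `N ∈ K[x,y][S_{λ,μ}]`, using `S_x ↦ S_{λ,μ}^λ`. -/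
noncomputable def xShift (lam : ℤ) (ℓ : ℕ) : OpR K →+ OpR K :=
  Finsupp.liftAddHom fun l =>
    (Finsupp.singleAddHom ((ℓ : ℤ) * lam + l)).comp (σxR K ^ (ℓ : ℤ)).toAddMonoidHom

theorem IsDominanceDegree.opDeg_reduceMod_xShift_le {D : Rxy K → ℕ} (hD : IsDominanceDegree D)
    (lam μ : ℤ) (ℓ : ℕ) (N : OpR K) :
    opDeg D (reduceMod (σyR K) μ (xShift K lam ℓ N)) ≤ opDeg D N :=
  (hD.opDeg_liftAddHom_le _ _ (fun _ => dominatedBy_σyR_zpow _) _).trans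
    (hD.opDeg_liftAddHom_le _ _ (fun _ => dominatedBy_σxR_zpow _) _)

theorem toOpB_add (N N' : OpR K) : toOpB K (N + N') = toOpB K N + toOpB K N' :=
  Finsupp.mapRange_add (map_add _) N N'

theorem reduceMod_toOpB_C_smul (μ : ℤ) (c : Polynomial K) (N : OpR K) :
    reduceMod (σyF K) μ (toOpB K (C c • N)) = toOpB K (C c • reduceMod (σyR K) μ N) := by
  induction N using Finsupp.induction_linear with
  | zero => simp [toOpB]
  | add N N' h h' => simp only [smul_add, toOpB_add, map_add, h, h']
  | single j a =>
    simp only [Finsupp.smul_single, reduceMod_single, toOpB, Finsupp.mapRange_single, smul_eq_mul,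
      σyF_zpow_ι₀, map_mul, σyR_zpow_C]

end PolynomialCoefficients

section ScalarMultiplication

variable {K : Type*} [Field K]

theorem mulA_add_left (L L' M : OpA K) : mulA K (L + L') M = mulA K L M + mulA K L' M := by
  unfold mulA
  exact Finsupp.sum_add_index' (by simp) fun _ _ _ => by simp [add_mul, Finsupp.sum_add]

theorem mulA_add_right (L M M' : OpA K) : mulA K L (M + M') = mulA K L M + mulA K L M' := by
  unfold mulA
  rw [← Finsupp.sum_add]
  refine Finsupp.sum_congr fun _ _ => Finsupp.sum_add_index' (by simp) fun _ _ _ => ?_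
  simp [mul_add]

theorem mulA_single_single (p q : ℤ × ℤ) (a b : Fxy K) :
    mulA K (Finsupp.single p a) (Finsupp.single q b) = Finsupp.single (p + q) (a * σv K p b) := by
  unfold mulA
  rw [Finsupp.sum_single_index, Finsupp.sum_single_index] <;> simp

variable (α β lam μ : ℤ)

theorem odot_add_left (L L' : OpA K) (M : OpB K) :
    odot K α β lam μ (L + L') M = odot K α β lam μ L M + odot K α β lam μ L' M := by
  simp only [odot, mulA_add_left, φB, Finsupp.mapDomain_add]

theorem odot_add_right (L : OpA K) (M M' : OpB K) :
    odot K α β lam μ L (M + M') = odot K α β lam μ L M + odot K α β lam μ L M' := by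
  simp only [odot, ιB, Finsupp.mapDomain_add, mulA_add_right, φB]

noncomputable def odotLeft (M : OpB K) : OpA K →+ OpB K :=
  AddMonoidHom.mk' (odot K α β lam μ · M) fun L L' => odot_add_left α β lam μ L L' M

noncomputable def odotRight (L : OpA K) : OpB K →+ OpB K :=
  AddMonoidHom.mk' (odot K α β lam μ L) (odot_add_right α β lam μ L)

theorem odot_zero_right (L : OpA K) : odot K α β lam μ L 0 = 0 :=
  map_zero (odotRight α β lam μ L)

theorem odot_single_single (p : ℤ × ℤ) (k : ℤ) (a b : Fxy K) :
    odot K α β lam μ (Finsupp.single p a) (Finsupp.single k b)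
      = Finsupp.single (p.1 * lam + p.2 * μ + k * (α * lam + β * μ)) (a * σv K p b) := by
  simp only [odot, ιB, φB, Finsupp.mapDomain_single, mulA_single_single, Prod.fst_add,
    Prod.snd_add]
  congr 1
  ring

variable {α β lam μ}

theorem odot_SyOne_single (hb : α * lam + β * μ = 1) (k : ℤ) (b : Fxy K) :
    odot K α β lam μ (SyOne K) (Finsupp.single k b)
      = Finsupp.single (k + μ) (σyF K b) - Finsupp.single k b := by
  rw [SyOne, sub_eq_add_neg, ← Finsupp.single_neg, odot_add_left, odot_single_single,
    odot_single_single, hb]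
  simp [σv, sub_eq_add_neg, add_comm]

theorem odot_SyOne_apply (hb : α * lam + β * μ = 1) (W : OpB K) (j : ℤ) :
    odot K α β lam μ (SyOne K) W j = σyF K (W (j - μ)) - W j := by
  induction W using Finsupp.induction_linear with
  | zero => simp [odot_zero_right]
  | add W W' h h' =>
    rw [odot_add_right, Finsupp.add_apply, h, h', Finsupp.add_apply, Finsupp.add_apply, map_add]
    abel
  | single k b =>
    rw [odot_SyOne_single hb]
    simp only [Finsupp.sub_apply, Finsupp.single_apply]
    congr 1
    by_cases h : k = j - μ
    · rw [if_pos (by omega), if_pos h]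
    · rw [if_neg (by omega), if_neg h, map_zero]

end ScalarMultiplication

section LeftScalarRemainder

variable {K : Type*} [Field K] {α β lam μ : ℤ}

theorem single_sub_single_mem_range (hb : α * lam + β * μ = 1) (j : ℤ) (b : Fxy K) (t : ℤ) :
    Finsupp.single j b - Finsupp.single (j - t * μ) ((σyF K ^ (-t)) b)
      ∈ (odotRight α β lam μ (SyOne K)).range := by
  have step (k : ℤ) (s : ℤ) :
      Finsupp.single (k + μ) ((σyF K ^ (s + 1)) b) - Finsupp.single k ((σyF K ^ s) b)
        ∈ (odotRight α β lam μ (SyOne K)).range := by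
    refine ⟨Finsupp.single k ((σyF K ^ s) b), ?_⟩
    rw [add_comm s 1, zpow_one_add, RingAut.mul_apply]
    exact odot_SyOne_single hb k _
  induction t using Int.induction_on with
  | zero => simp
  | succ t ih =>
    convert add_mem ih (step (j - (t + 1) * μ) (-(t + 1))) using 1
    rw [show j - (t + 1) * μ + μ = j - t * μ by ring, show -((t : ℤ) + 1) + 1 = -t by ring]
    abel
  | pred t ih =>
    convert sub_mem ih (step (j - -t * μ) (-(-t : ℤ))) using 1
    rw [show j - -(t : ℤ) * μ + μ = j - (-t - 1) * μ by ring,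
      show -(-(t : ℤ)) + 1 = -(-t - 1) by ring]
    abel

theorem sub_reduceMod_mem_range (hb : α * lam + β * μ = 1) (W : OpB K) :
    W - reduceMod (σyF K) μ W ∈ (odotRight α β lam μ (SyOne K)).range := by
  induction W using Finsupp.induction_linear with
  | zero => simp
  | add W W' h h' =>
    rw [map_add, add_sub_add_comm]
    exact add_mem h h'
  | single j b =>
    rw [reduceMod_single, Int.emod_def, mul_comm]
    exact single_sub_single_mem_range hb j b _

theorem eq_zero_of_mem_range_of_support_subset (hb : α * lam + β * μ = 1) (hμ : 0 < μ)
    {V : OpB K} (hV : V ∈ (odotRight α β lam μ (SyOne K)).range)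
    (hsupp : V.support ⊆ Finset.Ico 0 μ) : V = 0 := by
  obtain ⟨W, rfl⟩ := hV
  rcases eq_or_ne W 0 with rfl | hW
  · exact map_zero _
  exfalso
  have hne : W.support.Nonempty := Finsupp.support_nonempty_iff.mpr hW
  set top := W.support.max' hne
  set bot := W.support.min' hne
  have hmem (j : ℤ) (hj : odot K α β lam μ (SyOne K) W j ≠ 0) : 0 ≤ j ∧ j < μ :=
    Finset.mem_Ico.mp (hsupp (Finsupp.mem_support_iff.mpr hj))
  have h_above : W (top + μ) = 0 :=
    Finsupp.notMem_support_iff.mp fun h => by linarith [W.support.le_max' _ h]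
  have h_below : W (bot - μ) = 0 :=
    Finsupp.notMem_support_iff.mp fun h => by linarith [W.support.min'_le _ h]
  have htop : 0 ≤ top + μ ∧ top + μ < μ := hmem _ <| by
    rw [odot_SyOne_apply hb, add_sub_cancel_right, h_above, sub_zero]
    exact (_root_.map_ne_zero _).mpr (Finsupp.mem_support_iff.mp (W.support.max'_mem hne))
  have hbot : 0 ≤ bot ∧ bot < μ := hmem _ <| by
    rw [odot_SyOne_apply hb, h_below, map_zero, zero_sub, neg_ne_zero]
    exact Finsupp.mem_support_iff.mp (W.support.min'_mem hne)
  linarith [W.support.min'_le_max' hne]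

theorem lord_le_of_mem {M : OpB K} {j : ℤ} (hj : j ∈ M.support) : lord K M ≤ j := by
  obtain ⟨a, ha⟩ := Finset.min_of_mem hj
  simpa [lord, ha] using Finset.min_le hj

theorem le_hord_of_mem {M : OpB K} {j : ℤ} (hj : j ∈ M.support) : j ≤ hord K M := by
  obtain ⟨a, ha⟩ := Finset.max_of_mem hj
  simpa [hord, ha] using Finset.le_max hj

theorem φB_SyOne : φB K lam μ (SyOne K) = Finsupp.single μ 1 - Finsupp.single 0 1 := by
  simp [φB, SyOne, Finsupp.mapDomain_sub]

theorem support_φB_SyOne (hμ : 0 < μ) : (φB K lam μ (SyOne K)).support = {0, μ} := by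
  ext j
  rw [φB_SyOne, Finsupp.mem_support_iff, Finsupp.sub_apply, Finsupp.single_apply,
    Finsupp.single_apply]
  by_cases h0 : j = 0
  · simp [h0, hμ.ne']
  by_cases hμj : j = μ
  · simp [hμj, hμ.ne, hμ.ne']
  · simp [h0, hμj, Ne.symm hμj, Ne.symm h0]

theorem lord_φB_SyOne (hμ : 0 < μ) : lord K (φB K lam μ (SyOne K)) = 0 := by
  simp [lord, support_φB_SyOne hμ, hμ.le]

theorem hord_φB_SyOne (hμ : 0 < μ) : hord K (φB K lam μ (SyOne K)) = μ := by
  simp [hord, support_φB_SyOne hμ, hμ.le]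

theorem support_subset_Ico_of_orders (hμ : 0 < μ) {R : OpB K}
    (hR : R = 0 ∨ (lord K (φB K lam μ (SyOne K)) ≤ lord K R ∧ lord K R ≤ hord K R ∧
      hord K R < hord K (φB K lam μ (SyOne K)))) :
    R.support ⊆ Finset.Ico 0 μ := by
  rw [lord_φB_SyOne hμ, hord_φB_SyOne hμ] at hR
  rcases hR with rfl | ⟨hlord, -, hhord⟩
  · simp
  · exact fun j hj => Finset.mem_Ico.mpr
      ⟨hlord.trans (lord_le_of_mem hj), (le_hord_of_mem hj).trans_lt hhord⟩

theorem eq_reduceMod_of_isLSR (hb : α * lam + β * μ = 1) (hμ : 0 < μ) {X Q R : OpB K}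
    (hX : X = odot K α β lam μ (SyOne K) Q + R)
    (hR : R = 0 ∨ (lord K (φB K lam μ (SyOne K)) ≤ lord K R ∧ lord K R ≤ hord K R ∧
      hord K R < hord K (φB K lam μ (SyOne K)))) :
    R = reduceMod (σyF K) μ X := by
  have hmem : R - reduceMod (σyF K) μ X ∈ (odotRight α β lam μ (SyOne K)).range := by
    convert sub_mem (sub_reduceMod_mem_range hb X) ⟨Q, rfl⟩ using 1
    rw [hX]
    change _ = _ - odot K α β lam μ (SyOne K) Q
    abel
  refine sub_eq_zero.mp (eq_zero_of_mem_range_of_support_subset hb hμ hmem ?_)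
  exact Finsupp.support_sub.trans (Finset.union_subset (support_subset_Ico_of_orders hμ hR)
    (support_reduceMod_subset _ hμ _))

theorem odot_single_inv_smul_toOpB (hb : α * lam + β * μ = 1) {u : Polynomial K} (hu : u ≠ 0)
    (ℓ : ℕ) (c : Polynomial K) (N : OpR K) :
    odot K α β lam μ (Finsupp.single ((ℓ : ℤ), 0) (ιx₀ K (c * (σxK K ^ ℓ) u)))
        ((ιx₀ K u)⁻¹ • toOpB K N) = toOpB K (C c • xShift K lam ℓ N) := by
  induction N using Finsupp.induction_linear with
  | zero => simp [toOpB, odot_zero_right]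
  | add N N' h h' => rw [toOpB_add, smul_add, odot_add_right, h, h', map_add, smul_add, toOpB_add]
  | single l a =>
    have hv : ι₀ K (C ((σxK K ^ (ℓ : ℤ)) u)) ≠ 0 :=
      (map_ne_zero_iff _ (IsFractionRing.injective (Rxy K) (Fxy K))).mpr
        (C_ne_zero.mpr ((map_ne_zero_iff _ (σxK K ^ (ℓ : ℤ)).injective).mpr hu))
    simp only [toOpB, Finsupp.mapRange_single, Finsupp.smul_single, smul_eq_mul,
      odot_single_single, hb, xShift, Finsupp.liftAddHom_apply_single, AddMonoidHom.comp_apply,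
      Finsupp.singleAddHom_apply, zero_mul, mul_one, add_zero]
    congr 1
    change ι₀ K (C (c * (σxK K ^ ℓ) u)) * (σxF K ^ (ℓ : ℤ) * σyF K ^ (0 : ℤ))
      ((ι₀ K (C u))⁻¹ * ι₀ K a) = ι₀ K (C c * (σxR K ^ (ℓ : ℤ)) a)
    rw [zpow_zero, mul_one, map_mul (σxF K ^ (ℓ : ℤ)), map_inv₀, σxF_zpow_ι₀, σxF_zpow_ι₀,
      σxR_zpow_C, ← zpow_natCast, C_mul, map_mul (ι₀ K), map_mul (ι₀ K), mul_assoc,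
      mul_inv_cancel_left₀ hv]

theorem odot_ansatz (hb : α * lam + β * μ = 1) {u : Polynomial K} (hu : u ≠ 0) (ρ : ℕ)
    (c : ℕ → Polynomial K) {N : OpR K} {M : OpB K} (hM : ∀ l, M l = ι₀ K (N l) / ιx₀ K u) :
    odot K α β lam μ
        (∑ ℓ ∈ Finset.range (ρ + 1), Finsupp.single ((ℓ : ℤ), 0) (ιx₀ K (c ℓ * (σxK K ^ ℓ) u))) M
      = ∑ ℓ ∈ Finset.range (ρ + 1), toOpB K (C (c ℓ) • xShift K lam ℓ N) := by
  obtain rfl : M = (ιx₀ K u)⁻¹ • toOpB K N := by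
    ext l
    simp [hM l, toOpB, div_eq_inv_mul]
  exact (map_sum (odotLeft α β lam μ _) _ _).trans
    (Finset.sum_congr rfl fun ℓ _ => odot_single_inv_smul_toOpB hb hu ℓ (c ℓ) N)

end LeftScalarRemainder

theorem statement13_general (K : Type*) [Field K]
    (m : ℕ) (d : Fin m → ℕ)
    (lam μ α β : Fin m → ℤ)
    (hμ : ∀ i, 0 < μ i)
    (hbez : ∀ i, α i * lam i + β i * μ i = 1)
    (M : (i : Fin m) → Fin (d i) → OpB K)
    -- the common denominator `u` and the numerator operators `M̃_{ik}`:
    (u : Polynomial K) (hu : u ≠ 0)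
    (Mt : (i : Fin m) → Fin (d i) → OpR K)
    (hMt : ∀ i k, ∀ l : ℤ, M i k l = ι₀ K (Mt i k l) / ιx₀ K u)
    -- the ansatz `L = Σ_{ℓ=0}^{ρ} c_ℓ σ_x^ℓ(u) S_x^ℓ`:
    (ρ : ℕ) (c : ℕ → Polynomial K) (L : OpA K)
    (hL : L = ∑ ℓ ∈ Finset.range (ρ + 1),
        Finsupp.single ((ℓ : ℤ), (0 : ℤ)) (ιx₀ K (c ℓ * (σxK K ^ ℓ) u))) :
    ∀ (i : Fin m) (k : Fin (d i)) (Rik : OpB K),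
      (∃ Q : OpB K,
        odot K (α i) (β i) (lam i) (μ i) L (M i k) =
            odot K (α i) (β i) (lam i) (μ i) (SyOne K) Q + Rik ∧
          (Rik = 0 ∨
            (lord K (φB K (lam i) (μ i) (SyOne K)) ≤ lord K Rik ∧
              lord K Rik ≤ hord K Rik ∧
              hord K Rik < hord K (φB K (lam i) (μ i) (SyOne K))))) →
      ∃ Rt : ℕ → OpR K,
        (∀ ℓ, ℓ ≤ ρ →
          (∀ l : ℤ, l < 0 → Rt ℓ l = 0) ∧
          degXOp K (Rt ℓ) ≤ degXOp K (Mt i k) ∧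
          degYOp K (Rt ℓ) ≤ degYOp K (Mt i k) ∧
          degXYOp K (Rt ℓ) ≤ degXYOp K (Mt i k)) ∧
        Rik = ∑ ℓ ∈ Finset.range (ρ + 1), toOpB K (Polynomial.C (c ℓ) • Rt ℓ) := by
  rintro i k Rik ⟨Q, hQ, hR⟩
  set Rt := fun ℓ => reduceMod (σyR K) (μ i) (xShift K (lam i) ℓ (Mt i k))
  refine ⟨Rt, fun ℓ _ => ⟨fun l hl => ?_, ?_, ?_, ?_⟩, ?_⟩
  · by_contra h
    have := Finset.mem_Ico.mp (support_reduceMod_subset _ (hμ i) _ (Finsupp.mem_support_iff.mpr h))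
    omega
  · exact isDominanceDegree_degX.opDeg_reduceMod_xShift_le _ _ ℓ _
  · exact isDominanceDegree_natDegree.opDeg_reduceMod_xShift_le _ _ ℓ _
  · exact isDominanceDegree_degXY.opDeg_reduceMod_xShift_le _ _ ℓ _
  · rw [eq_reduceMod_of_isLSR (hbez i) (hμ i) hQ hR, hL, odot_ansatz (hbez i) hu ρ c (hMt i k),
      map_sum]
    exact Finset.sum_congr rfl fun ℓ _ => reduceMod_toOpB_C_smul _ _ _

/-- Lemma `LEM:systemdeg`.
Let `r = Σ_i Σ_k M_{ik}(1/p_i(λ_i x + μ_i y)^k)` be as in Theorem `THM:criterion`, let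
`u ∈ K[x]` be the common denominator of the `M_{ik}` with `M_{ik} = (1/u) M̃_{ik}`,
`M̃_{ik} ∈ K[x,y,S_{λ_i,μ_i}]`, and let
`L = Σ_{ℓ=0}^{ρ} c_ℓ σ_x^ℓ(u) S_x^ℓ ∈ K[x][S_x]`.  Then for each pair `(i,k)` the left
scalar remainder `R_{ik}` of `L ⊙ M_{ik}` by `S_y − 1` can be written as
`R_{ik} = c_ρ R̃_{ikρ} + ⋯ + c_0 R̃_{ik0}` with `R̃_{ikℓ} ∈ K[x,y,S_{λ_i,μ_i}]`,
`deg_x(R̃_{ikℓ}) ≤ deg_x(M̃_{ik})`, `deg_y(R̃_{ikℓ}) ≤ deg_y(M̃_{ik})`, and the total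
degree in `(x,y)` of `R̃_{ikℓ}` at most that of `M̃_{ik}`. -/
theorem statement13 (K : Type*) [Field K] [CharZero K]
    (m : ℕ) (d : Fin m → ℕ) (hd : ∀ i, 0 < d i)
    (lam μ α β : Fin m → ℤ)
    (hμ : ∀ i, 0 < μ i) (hcop : ∀ i, IsCoprime (lam i) (μ i))
    (hbez : ∀ i, α i * lam i + β i * μ i = 1)
    (hα : ∀ i, 0 ≤ α i ∧ α i < μ i)
    (hβ : ∀ i, lam i ≠ 0 → |β i| ≤ |lam i|)
    (hβ0 : ∀ i, lam i = 0 → α i = 0 ∧ β i = 1)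
    (p : Fin m → Polynomial K) (hp : ∀ i, (p i).Monic) (hpirr : ∀ i, Irreducible (p i))
    (M : (i : Fin m) → Fin (d i) → OpB K)
    (hMcoeff : ∀ i k, ∀ l : ℤ, ∃ (aa : Rxy K) (uu : Polynomial K), uu ≠ 0 ∧
        M i k l = ι₀ K aa / ιx₀ K uu ∧ aa.degree < (p i).degree)
    (hMpoly : ∀ i k, ∀ l : ℤ, l < 0 → M i k l = 0)
    (hineq : ∀ i j : Fin m, i ≠ j → ∀ s t : ℤ,
        peR K (lam i) (μ i) (p i) ≠ (σxR K ^ s * σyR K ^ t) (peR K (lam j) (μ j) (p j)))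
    -- the common denominator `u` and the numerator operators `M̃_{ik}`:
    (u : Polynomial K) (hu : u ≠ 0)
    (Mt : (i : Fin m) → Fin (d i) → OpR K)
    (hMt : ∀ i k, ∀ l : ℤ, M i k l = ι₀ K (Mt i k l) / ιx₀ K u)
    -- the ansatz `L = Σ_{ℓ=0}^{ρ} c_ℓ σ_x^ℓ(u) S_x^ℓ`:
    (ρ : ℕ) (c : ℕ → Polynomial K) (L : OpA K)
    (hL : L = ∑ ℓ ∈ Finset.range (ρ + 1),
        Finsupp.single ((ℓ : ℤ), (0 : ℤ)) (ιx₀ K (c ℓ * (σxK K ^ ℓ) u))) :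
    ∀ (i : Fin m) (k : Fin (d i)) (Rik : OpB K),
      (∃ Q : OpB K,
        odot K (α i) (β i) (lam i) (μ i) L (M i k) =
            odot K (α i) (β i) (lam i) (μ i) (SyOne K) Q + Rik ∧
          (Rik = 0 ∨
            (lord K (φB K (lam i) (μ i) (SyOne K)) ≤ lord K Rik ∧
              lord K Rik ≤ hord K Rik ∧
              hord K Rik < hord K (φB K (lam i) (μ i) (SyOne K))))) →
      ∃ Rt : ℕ → OpR K,
        (∀ ℓ, ℓ ≤ ρ →
          (∀ l : ℤ, l < 0 → Rt ℓ l = 0) ∧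
          degXOp K (Rt ℓ) ≤ degXOp K (Mt i k) ∧
          degYOp K (Rt ℓ) ≤ degYOp K (Mt i k) ∧
          degXYOp K (Rt ℓ) ≤ degXYOp K (Mt i k)) ∧
        Rik = ∑ ℓ ∈ Finset.range (ρ + 1), toOpB K (Polynomial.C (c ℓ) • Rt ℓ) :=
  statement13_general K m d lam μ α β hμ hbez M u hu Mt hMt ρ c L hL
end

section
/- Let f = p_1(λ_1 x + μ_1 y) and g = p_2(λ_2 x + μ_2 y) be integer-linear polynomials in K[x,y], where p_1, p_2 ∈ K[z] have positive degree, λ_i, μ_i are integers with μ_i > 0 and gcd(λ_i, μ_i) = 1. Then f ∼_{x,y} g if and only if (λ_1, μ_1) = (λ_2, μ_2) and p_1(z) = p_2(z + ℓ) for some integer ℓ. -/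
open Polynomial BigOperators

/-!
The shift `σ_x^s σ_y^t` sends `p(λx + μy)` to `p(λx + μy + λs + μt)`, and by Bézout every integer
`ℓ` is of the form `λs + μt`; this gives one direction. Conversely, specialising `x ↦ r` turns
`p(λx + μy)` into the Taylor shift by `λr/μ` of `p(μy)`. Comparing `r = 0` with `r = 1` on both
sides, and using that a nonconstant polynomial in characteristic zero has no nonzero period, gives
`λ₁/μ₁ = λ₂/μ₂`, hence `(λ₁, μ₁) = (λ₂, μ₂)` as both are in lowest terms with `μ > 0`.
-/

namespace Polynomial

variable {R : Type*}

theorem eval₂_taylor {S : Type*} [CommSemiring R] [CommSemiring S] (f : R →+* S) (w : S) (c : R)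
    (p : R[X]) : (taylor c p).eval₂ f w = p.eval₂ f (w + f c) := by
  rw [taylor_apply, eval₂_comp, eval₂_add, eval₂_X, eval₂_C]

theorem aeval_X_add_intCast [CommRing R] (ℓ : ℤ) (p : R[X]) :
    aeval (X + (ℓ : R[X])) p = taylor (ℓ : R) p := by
  rw [taylor_apply, comp_eq_aeval, C_eq_intCast]

theorem comp_C_add_C_mul_X [Field R] (a : R) {b : R} (hb : b ≠ 0) (p : R[X]) :
    p.comp (C a + C b * X) = taylor (a / b) (p.comp (C b * X)) := by
  rw [taylor_apply, comp_assoc, mul_comp, C_comp, X_comp, mul_add, ← C_mul, mul_div_cancel₀ a hb,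
    add_comm]

theorem comp_C_mul_X_injective [CommRing R] [IsDomain R] {b : R} (hb : b ≠ 0) :
    Function.Injective fun p : R[X] => p.comp (C b * X) := fun p q h => by
  rw [← sub_eq_zero, ← comp_C_mul_X_eq_zero_iff (mem_nonZeroDivisors_of_ne_zero hb), sub_comp]
  exact sub_eq_zero.2 h

theorem taylor_left_injective [CommRing R] [IsDomain R] [CharZero R] {f : R[X]}
    (hf : 0 < f.natDegree) : Function.Injective fun c : R => taylor c f := by
  intro c₁ c₂ h
  by_contra hne
  have hper : Function.Periodic f.eval (c₁ - c₂) := fun x => by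
    simpa [taylor_eval, add_comm_sub] using congrArg (eval (x - c₂)) h
  have hinf : (Set.range fun n : ℕ => (n : R) * (c₁ - c₂)).Infinite :=
    Set.infinite_range_of_injective fun m n hmn =>
      Nat.cast_injective (mul_left_injective₀ (sub_ne_zero.2 hne) hmn)
  have hconst : f = C (f.eval 0) := eq_of_infinite_eval_eq _ _ <| hinf.mono <| by
    rintro _ ⟨n, rfl⟩
    simpa using hper.nat_mul_eq n
  rw [hconst, natDegree_C] at hf
  exact hf.false

end Polynomial

namespace RingAut

variable {R : Type*} [Ring R] (φ : RingAut R) {u : R}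

theorem zpow_apply_eq_add_mul {c : ℤ} (h : φ u = u + c) (n : ℤ) : (φ ^ n) u = u + (n * c : ℤ) := by
  induction n using Int.induction_on with
  | zero => simp
  | succ k ih =>
    rw [zpow_add_one, RingAut.mul_apply, h, map_add, ih, map_intCast]
    push_cast; noncomm_ring
  | pred k ih =>
    have hinv : φ⁻¹ u = u - c := φ.injective <| by
      rw [map_sub, map_intCast, h, add_sub_cancel_right]; exact φ.apply_symm_apply u
    rw [zpow_sub_one, RingAut.mul_apply, hinv, map_sub, ih, map_intCast]
    push_cast; noncomm_ring

theorem zpow_apply_eq_self (h : φ u = u) (n : ℤ) : (φ ^ n) u = u := by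
  simpa using φ.zpow_apply_eq_add_mul (c := 0) (by simpa using h) n

end RingAut

theorem Int.eq_of_div_eq_div_of_isCoprime {a b c d : ℤ} (hb : 0 < b) (hd : 0 < d)
    (hab : IsCoprime a b) (hcd : IsCoprime c d) (h : (a : ℚ) / b = c / d) : a = c ∧ b = d :=
  Rat.div_int_inj hb hd (Int.isCoprime_iff_gcd_eq_one.mp hab) (Int.isCoprime_iff_gcd_eq_one.mp hcd) h

section Shifts

variable (K : Type*) [Field K]

theorem σxR_C_X : σxR K (C X) = C X + 1 := by
  simp [σxR, shiftPoly, mapEquiv_apply]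

theorem σxR_X : σxR K X = X := by
  simp [σxR, shiftPoly, mapEquiv_apply]

theorem σxR_C_C (a : K) : σxR K (C (C a)) = C (C a) := by
  simp [σxR, shiftPoly, mapEquiv_apply]

theorem σyR_C (q : K[X]) : σyR K (C q) = C q := by
  simp [σyR, shiftPoly]

theorem σyR_X : σyR K X = X + 1 := by
  simp [σyR, shiftPoly]

variable (s t : ℤ)

theorem zpow_σxR_mul_zpow_σyR_C_C (a : K) :
    (σxR K ^ s * σyR K ^ t) (C (C a)) = C (C a) := by
  rw [RingAut.mul_apply, (σyR K).zpow_apply_eq_self (σyR_C K _),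
    (σxR K).zpow_apply_eq_self (σxR_C_C K a)]

theorem zpow_σxR_mul_zpow_σyR_wR (lam μ : ℤ) :
    (σxR K ^ s * σyR K ^ t) (wR K lam μ) = wR K lam μ + ((lam * s + μ * t : ℤ) : Rxy K) := by
  have hx := (σxR K).zpow_apply_eq_add_mul (c := 1) (by simpa using σxR_C_X K) s
  have hy := (σyR K).zpow_apply_eq_add_mul (c := 1) (by simpa using σyR_X K) t
  simp only [wR, RingAut.mul_apply, map_add, map_mul, map_intCast, hx, hy,
    (σyR K).zpow_apply_eq_self (σyR_C K X), (σxR K).zpow_apply_eq_self (σxR_X K)]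
  push_cast; ring

theorem zpow_σxR_mul_zpow_σyR_peR (lam μ : ℤ) (p : K[X]) :
    (σxR K ^ s * σyR K ^ t) (peR K lam μ p)
      = peR K lam μ (taylor ((lam * s + μ * t : ℤ) : K) p) := by
  have hconst : ((σxR K ^ s * σyR K ^ t : RingAut (Rxy K)) : Rxy K →+* Rxy K).comp
      (algebraMap K (Rxy K)) = algebraMap K (Rxy K) :=
    RingHom.ext fun a => by simpa using zpow_σxR_mul_zpow_σyR_C_C K s t a
  rw [peR, peR, eval₂_taylor, map_intCast, ← zpow_σxR_mul_zpow_σyR_wR]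
  exact (hom_eval₂ _ _ _ _).trans (by rw [hconst])

end Shifts

section Specialisation

variable {K : Type*} [Field K]

theorem map_evalRingHom_peR (r : K) (lam : ℤ) {μ : ℤ} (hμ : (μ : K) ≠ 0) (p : K[X]) :
    (peR K lam μ p).map (evalRingHom r) = taylor (lam * r / μ) (p.comp (C (μ : K) * X)) := by
  have hconst : (mapRingHom (evalRingHom r)).comp (algebraMap K (Rxy K)) = C :=
    RingHom.ext fun a => by simp
  have hw : mapRingHom (evalRingHom r) (wR K lam μ) = C ((lam : K) * r) + C (μ : K) * X := by
    simp [wR, mul_comm]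
  rw [← comp_C_add_C_mul_X _ hμ, peR, ← coe_mapRingHom, hom_eval₂, hconst, hw]
  rfl

theorem peR_inj_of_isCoprime [CharZero K] {lam₁ μ₁ lam₂ μ₂ : ℤ} (hμ₁ : 0 < μ₁) (hμ₂ : 0 < μ₂)
    (hcop₁ : IsCoprime lam₁ μ₁) (hcop₂ : IsCoprime lam₂ μ₂) {p₁ p₂ : K[X]}
    (hp₁ : 0 < p₁.natDegree) (h : peR K lam₁ μ₁ p₁ = peR K lam₂ μ₂ p₂) :
    (lam₁, μ₁) = (lam₂, μ₂) ∧ p₁ = p₂ := by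
  have hμ₁K : (μ₁ : K) ≠ 0 := Int.cast_ne_zero.2 hμ₁.ne'
  have hμ₂K : (μ₂ : K) ≠ 0 := Int.cast_ne_zero.2 hμ₂.ne'
  have h0 := congrArg (map (evalRingHom (0 : K))) h
  have h1 := congrArg (map (evalRingHom (1 : K))) h
  simp only [map_evalRingHom_peR _ _ hμ₁K, map_evalRingHom_peR _ _ hμ₂K, mul_zero, zero_div,
    taylor_zero, mul_one] at h0 h1
  rw [← h0] at h1
  have hdeg : 0 < (p₁.comp (C (μ₁ : K) * X)).natDegree := by
    rwa [natDegree_comp, natDegree_C_mul_X _ hμ₁K, mul_one]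
  have hratio : (lam₁ : ℚ) / μ₁ = lam₂ / μ₂ := by
    exact_mod_cast taylor_left_injective hdeg h1
  obtain ⟨rfl, rfl⟩ := Int.eq_of_div_eq_div_of_isCoprime hμ₁ hμ₂ hcop₁ hcop₂ hratio
  exact ⟨rfl, comp_C_mul_X_injective hμ₁K h0⟩

end Specialisation

theorem statement19_general (K : Type*) [Field K] [CharZero K]
    (lam₁ μ₁ lam₂ μ₂ : ℤ) (hμ₁ : 0 < μ₁) (hμ₂ : 0 < μ₂)
    (hcop₁ : IsCoprime lam₁ μ₁) (hcop₂ : IsCoprime lam₂ μ₂)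
    (p₁ p₂ : Polynomial K) (hp₁ : 0 < p₁.natDegree) :
    (∃ s t : ℤ,
        peR K lam₁ μ₁ p₁ = (σxR K ^ s * σyR K ^ t) (peR K lam₂ μ₂ p₂)) ↔
      ((lam₁, μ₁) = (lam₂, μ₂) ∧
        ∃ ℓ : ℤ, p₁ = Polynomial.aeval (Polynomial.X + (ℓ : Polynomial K)) p₂) := by
  simp only [zpow_σxR_mul_zpow_σyR_peR, aeval_X_add_intCast]
  constructor
  · rintro ⟨s, t, h⟩
    obtain ⟨hpair, rfl⟩ := peR_inj_of_isCoprime hμ₁ hμ₂ hcop₁ hcop₂ hp₁ h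
    exact ⟨hpair, _, rfl⟩
  · rintro ⟨hpair, ℓ, rfl⟩
    obtain ⟨rfl, rfl⟩ := Prod.mk.inj hpair
    obtain ⟨a, b, hab⟩ := hcop₁
    refine ⟨a * ℓ, b * ℓ, ?_⟩
    rw [show lam₁ * (a * ℓ) + μ₁ * (b * ℓ) = ℓ by linear_combination ℓ * hab]

/-- shift-equivalence of integer-linear polynomials.
Let `f = p_1(λ_1 x + μ_1 y)` and `g = p_2(λ_2 x + μ_2 y)` be integer-linear polynomials
in `K[x,y]`, where `p_1, p_2 ∈ K[z]` have positive degree, `λ_i, μ_i` are integers with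
`μ_i > 0` and `gcd(λ_i, μ_i) = 1`.  Then `f ∼_{x,y} g` if and only if
`(λ_1, μ_1) = (λ_2, μ_2)` and `p_1(z) = p_2(z + ℓ)` for some integer `ℓ`. -/
theorem statement19 (K : Type*) [Field K] [CharZero K]
    (lam₁ μ₁ lam₂ μ₂ : ℤ) (hμ₁ : 0 < μ₁) (hμ₂ : 0 < μ₂)
    (hcop₁ : IsCoprime lam₁ μ₁) (hcop₂ : IsCoprime lam₂ μ₂)
    (p₁ p₂ : Polynomial K) (hp₁ : 0 < p₁.natDegree) (hp₂ : 0 < p₂.natDegree) :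
    (∃ s t : ℤ,
        peR K lam₁ μ₁ p₁ = (σxR K ^ s * σyR K ^ t) (peR K lam₂ μ₂ p₂)) ↔
      ((lam₁, μ₁) = (lam₂, μ₂) ∧
        ∃ ℓ : ℤ, p₁ = Polynomial.aeval (Polynomial.X + (ℓ : Polynomial K)) p₂) :=
  statement19_general K lam₁ μ₁ lam₂ μ₂ hμ₁ hμ₂ hcop₁ hcop₂ p₁ p₂ hp₁
end
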